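/- Let 𝓗 be translation invariant, non-expansive (sup-norm), and span-contractive with factor ᾱ < 1 on ℝ^𝒦 (𝒦 finite), and let f : ℝ^𝒦 → ℝ satisfy f(0) = 0, f(q + λe) = f(q) + λ, and be Lipschitz. Suppose Q̃ and Q̂ both satisfy Q = 𝓗(Q) − f(Q)·e. Then Q̃ = Q̂. -/
import Mathlib


open Finset

noncomputable def spanSeminorm {K : Type*} [Fintype K] [Nonempty K] (v : K → ℝ) : ℝ :=
  (univ.sup' univ_nonempty v) - (univ.inf' univ_nonempty v)

noncomputable def supNorm {K : Type*} [Fintype K] [Nonempty K] (v : K → ℝ) : ℝ :=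
  univ.sup' univ_nonempty (fun k => |v k|)

lemma span_add_const {K : Type*} [Fintype K] [Nonempty K] (v : K → ℝ) (c : ℝ) :
    spanSeminorm (fun k => v k + c) = spanSeminorm v := by
  unfold spanSeminorm
  have h1 : (univ.sup' univ_nonempty fun k => v k + c) = univ.sup' univ_nonempty v + c := by
    apply le_antisymm
    · exact Finset.sup'_le _ _ fun k _ => by
        have := Finset.le_sup' v (Finset.mem_univ k); linarith
    · have h : ∀ k ∈ (univ : Finset K), v k ≤ (univ.sup' univ_nonempty fun k => v k + c) - c := by
        intro k _
        have := Finset.le_sup' (fun k => v k + c) (Finset.mem_univ k); linarith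
      have := Finset.sup'_le univ_nonempty v h; linarith
  have h2 : (univ.inf' univ_nonempty fun k => v k + c) = univ.inf' univ_nonempty v + c := by
    apply le_antisymm
    · have h : ∀ k ∈ (univ : Finset K), (univ.inf' univ_nonempty fun k => v k + c : ℝ) - c ≤ v k := by
        intro k _
        have := Finset.inf'_le (fun k => v k + c) (Finset.mem_univ k); linarith
      have := Finset.le_inf' univ_nonempty v h; linarith
    · exact Finset.le_inf' _ _ fun k _ => by
        have := Finset.inf'_le v (Finset.mem_univ k); linarith
  rw [h1, h2]; ring

lemma span_zero_const {K : Type*} [Fintype K] [Nonempty K] (v : K → ℝ)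
    (h : spanSeminorm v ≤ 0) : ∀ k, v k = univ.inf' univ_nonempty v := by
  intro k
  have h1 := Finset.inf'_le v (Finset.mem_univ k)
  have h2 := Finset.le_sup' v (Finset.mem_univ k)
  unfold spanSeminorm at h
  linarith

theorem stmt_16 {K : Type*} [Fintype K] [Nonempty K]
    (H : (K → ℝ) → (K → ℝ)) (αbar : ℝ) (hα0 : 0 ≤ αbar) (hα1 : αbar < 1)
    (htrans : ∀ (q : K → ℝ) (lam : ℝ), H (fun k => q k + lam) = fun k => H q k + lam)
    (hnonexp : ∀ p q : K → ℝ, supNorm (H p - H q) ≤ supNorm (p - q))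
    (hspan : ∀ p q : K → ℝ, spanSeminorm (H p - H q) ≤ αbar * spanSeminorm (p - q))
    (f : (K → ℝ) → ℝ) (hf0 : f 0 = 0)
    (hftrans : ∀ (q : K → ℝ) (lam : ℝ), f (fun k => q k + lam) = f q + lam)
    (L : ℝ) (hfLip : ∀ p q : K → ℝ, |f p - f q| ≤ L * supNorm (p - q))
    (Qt Qh : K → ℝ)
    (hQt : Qt = fun k => H Qt k - f Qt)
    (hQh : Qh = fun k => H Qh k - f Qh) :
    Qt = Qh := by
  -- span of Qt - Qh equals span of H Qt - H Qh
  have hdiff : (Qt - Qh) = fun k => (H Qt - H Qh) k + (f Qh - f Qt) := by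
    funext k
    simp only [Pi.sub_apply]
    rw [congrFun hQt k, congrFun hQh k]
    ring
  have hspan_eq : spanSeminorm (Qt - Qh) = spanSeminorm (H Qt - H Qh) := by
    rw [hdiff, span_add_const]
  have hcontr : spanSeminorm (Qt - Qh) ≤ αbar * spanSeminorm (Qt - Qh) :=
    hspan_eq ▸ hspan Qt Qh
  have hle0 : spanSeminorm (Qt - Qh) ≤ 0 := by nlinarith
  -- hence Qt - Qh is constant
  set c := univ.inf' univ_nonempty (Qt - Qh) with hc
  have hconst : ∀ k, Qt k = Qh k + c := by
    intro k
    have h : Qt k - Qh k = c := span_zero_const (Qt - Qh) hle0 k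
    linarith
  have hQteq : Qt = fun k => Qh k + c := funext hconst
  -- translation invariance forces c = 0 at the fixed-point equation
  have hH : H Qt = fun k => H Qh k + c := by rw [hQteq, htrans]
  have hfQ : f Qt = f Qh + c := by rw [hQteq, hftrans]
  funext k
  have h1 := congrFun hQt k
  have h2 := congrFun hQh k
  rw [congrFun hH k, hfQ] at h1
  rw [hconst k]
  -- from h1: Qt k = H Qh k + c - (f Qh + c); h2 : Qh k = H Qh k - f Qh
  have : Qt k = Qh k := by rw [h1, h2]; ring
  linarith [hconst k, this]
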